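/- Let k be a field of characteristic p > 0 and let f ∈ k[x,y]. If f is a variable of k[x,y], then there exists a locally finite iterative higher k-derivation (lfihd) D on k[x,y] which is of Jacobian type determined by f, satisfies k[x,y]^D = k[f], and has a slice. -/

import Mathlib

open MvPolynomial

/-- A higher `R`-derivation on `B`: a family of `R`-linear maps `D ℓ : B → B`
with `D 0 = id` and the Leibniz rule `D ℓ (a*b) = ∑_{i+j=ℓ} D i a * D j b`. -/
structure HigherDerivation (R B : Type*) [CommRing R] [CommRing B] [Algebra R B] where
  D : ℕ → B →ₗ[R] B
  D_zero : D 0 = LinearMap.id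
  leibniz : ∀ (ℓ : ℕ) (a b : B),
    D ℓ (a * b) = ∑ ij ∈ Finset.HasAntidiagonal.antidiagonal ℓ, D ij.1 a * D ij.2 b

namespace HigherDerivation

variable {R B : Type*} [CommRing R] [CommRing B] [Algebra R B]

/-- The kernel `B^D = ⋂_{ℓ ≥ 1} ker D_ℓ` of a higher derivation. -/
def kerSet (hd : HigherDerivation R B) : Set B :=
  {b | ∀ ℓ : ℕ, 1 ≤ ℓ → hd.D ℓ b = 0}

/-- `D` is locally finite. -/
def LocallyFinite (hd : HigherDerivation R B) : Prop :=
  ∀ b : B, ∃ N : ℕ, ∀ ℓ : ℕ, N ≤ ℓ → hd.D ℓ b = 0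

/-- `D` is iterative: `D_i ∘ D_j = binom(i+j, j) • D_{i+j}`. -/
def Iterative (hd : HigherDerivation R B) : Prop :=
  ∀ (i j : ℕ) (b : B), hd.D i (hd.D j b) = (i + j).choose j • hd.D (i + j) b

/-- `s` is a slice of `D`: the `t`-degree `N ≥ 1` of `φ_D(s)` is minimal among the
`t`-degrees of `φ_D(b)` for `b ∉ B^D`, and the leading `t`-coefficient `D N s` of
`φ_D(s)` is a unit of `B` (in particular `s ∉ B^D`). -/
def IsSlice (hd : HigherDerivation R B) (s : B) : Prop :=
  ∃ N : ℕ, 1 ≤ N ∧ hd.D N s ≠ 0 ∧ (∀ ℓ : ℕ, N < ℓ → hd.D ℓ s = 0) ∧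
    IsUnit (hd.D N s) ∧ ∀ b : B, b ∉ hd.kerSet → ∃ m : ℕ, N ≤ m ∧ hd.D m b ≠ 0

end HigherDerivation
/-- The Jacobian derivation `Δ_h` on `k[x,y]`:
`Δ_h(g) = (∂h/∂x)(∂g/∂y) − (∂h/∂y)(∂g/∂x)`. -/
noncomputable def jacobianDeriv {k : Type*} [CommRing k]
    (h g : MvPolynomial (Fin 2) k) : MvPolynomial (Fin 2) k :=
  pderiv 0 h * pderiv 1 g - pderiv 1 h * pderiv 0 g

/-- `D` is of Jacobian type determined by `h` (in characteristic `p`): `h` is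
non-constant, `h ∈ B^D`, `D_1 = Δ_h`, and `ℓ! • D_ℓ = Δ_h^[ℓ]` for `0 ≤ ℓ ≤ p-1`. -/
def IsJacobianType {k : Type*} [CommRing k] (p : ℕ)
    (hd : HigherDerivation k (MvPolynomial (Fin 2) k))
    (h : MvPolynomial (Fin 2) k) : Prop :=
  (∀ c : k, h ≠ MvPolynomial.C c) ∧ h ∈ hd.kerSet ∧
    (∀ g, hd.D 1 g = jacobianDeriv h g) ∧
    ∀ ℓ : ℕ, ℓ < p → ∀ g, ℓ.factorial • hd.D ℓ g = (jacobianDeriv h)^[ℓ] g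

/-- `f` is a variable of `k[x,y]`. -/
def IsVariable {k : Type*} [CommRing k] (f : MvPolynomial (Fin 2) k) : Prop :=
  ∃ g : MvPolynomial (Fin 2) k,
    AlgebraicIndependent k ![f, g] ∧ Algebra.adjoin k {f, g} = ⊤

/-!
A variable `f` is the image of `x` under a `k`-automorphism `e` of `k[x,y]`. By the chain rule
the Jacobian `c = Δ_f(e y)` is a unit, hence a nonzero constant, and `Δ_f ∘ e = c • e ∘ ∂_y`.
So `D_ℓ = c^ℓ • e ∘ ∂_y^{(ℓ)} ∘ e⁻¹`, with `∂_y^{(ℓ)}` the Hasse derivatives in `y`, is a locally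
finite iterative higher derivation with `D_1 = Δ_f`, kernel `e(k[x]) = k[f]`, and slice `e y`.
Iterativity alone gives `ℓ! • D_ℓ = D_1^ℓ` in every degree.
-/

namespace HigherDerivation

variable {R B B' : Type*} [CommRing R] [CommRing B] [Algebra R B] [CommRing B'] [Algebra R B']

section Scale

variable (hd : HigherDerivation R B) (c : R)

noncomputable def scale : HigherDerivation R B where
  D ℓ := c ^ ℓ • hd.D ℓ
  D_zero := by rw [pow_zero, one_smul, hd.D_zero]
  leibniz ℓ a b := by
    simp only [LinearMap.smul_apply, hd.leibniz, Finset.smul_sum]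
    refine Finset.sum_congr rfl fun ij hij => ?_
    rw [smul_mul_smul_comm, ← pow_add, Finset.HasAntidiagonal.mem_antidiagonal.mp hij]

@[simp]
lemma scale_D (ℓ : ℕ) (b : B) : (hd.scale c).D ℓ b = c ^ ℓ • hd.D ℓ b := rfl

variable {hd}

lemma LocallyFinite.scale (h : hd.LocallyFinite) : (hd.scale c).LocallyFinite := fun b =>
  (h b).imp fun N hN ℓ hℓ => by rw [scale_D, hN ℓ hℓ, smul_zero]

lemma Iterative.scale (h : hd.Iterative) : (hd.scale c).Iterative := by
  intro i j b
  rw [scale_D, scale_D, scale_D, map_smul, h, smul_smul, ← pow_add, smul_comm]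

lemma kerSet_scale {c : R} (hc : IsUnit c) : (hd.scale c).kerSet = hd.kerSet := by
  ext b
  simp only [kerSet, Set.mem_ofPred_eq, scale_D, (hc.pow _).smul_eq_zero]

end Scale

section Map

variable (hd : HigherDerivation R B) (e : B ≃ₐ[R] B')

noncomputable def map : HigherDerivation R B' where
  D ℓ := e.toLinearMap ∘ₗ hd.D ℓ ∘ₗ e.symm.toLinearMap
  D_zero := by ext b; simp [hd.D_zero]
  leibniz ℓ a b := by simp [hd.leibniz]

@[simp]
lemma map_D (ℓ : ℕ) (b : B') : (hd.map e).D ℓ b = e (hd.D ℓ (e.symm b)) := rfl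

variable {hd}

lemma LocallyFinite.map (h : hd.LocallyFinite) : (hd.map e).LocallyFinite := fun b =>
  (h (e.symm b)).imp fun N hN ℓ hℓ => by rw [map_D, hN ℓ hℓ, map_zero]

lemma Iterative.map (h : hd.Iterative) : (hd.map e).Iterative := by
  intro i j b
  rw [map_D, map_D, map_D, e.symm_apply_apply, h, map_nsmul]

lemma kerSet_map : (hd.map e).kerSet = e '' hd.kerSet := by
  ext b
  constructor
  · intro hb
    exact ⟨e.symm b, fun ℓ hℓ => by simpa using hb ℓ hℓ, e.apply_symm_apply b⟩
  · rintro ⟨a, ha, rfl⟩ ℓ hℓ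
    simp [ha ℓ hℓ]

end Map

variable {hd : HigherDerivation R B}

lemma Iterative.factorial_smul_D (h : hd.Iterative) (ℓ : ℕ) (b : B) :
    ℓ.factorial • hd.D ℓ b = (hd.D 1)^[ℓ] b := by
  induction ℓ with
  | zero => simp [hd.D_zero]
  | succ n ih =>
    rw [Function.iterate_succ_apply', ← ih, map_nsmul, h, Nat.add_comm 1 n,
      Nat.choose_succ_self_right, smul_smul, Nat.factorial_succ, Nat.mul_comm]

lemma isSlice_of_isUnit_D_one [Nontrivial B] {s : B} (hs : IsUnit (hd.D 1 s))
    (hsucc : ∀ ℓ, 1 < ℓ → hd.D ℓ s = 0) : hd.IsSlice s := by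
  refine ⟨1, le_rfl, hs.ne_zero, hsucc, hs, fun b hb => ?_⟩
  simpa [kerSet] using hb

section Hasse

variable (R) (A : Type*) [CommRing A] [Algebra R A]

open Polynomial

noncomputable def hasse : HigherDerivation R A[X] where
  D ℓ := (hasseDeriv ℓ).restrictScalars R
  D_zero := by ext1 p; simp
  leibniz ℓ a b := hasseDeriv_mul ℓ a b

@[simp]
lemma hasse_D (ℓ : ℕ) (p : A[X]) : (hasse R A).D ℓ p = hasseDeriv ℓ p := rfl

lemma locallyFinite_hasse : (hasse R A).LocallyFinite := fun p =>
  ⟨p.natDegree + 1, fun ℓ hℓ => hasseDeriv_eq_zero_of_lt_natDegree p ℓ (by omega)⟩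

lemma iterative_hasse : (hasse R A).Iterative := by
  intro i j p
  rw [hasse_D, hasse_D, hasse_D, ← LinearMap.comp_apply, hasseDeriv_comp, Nat.choose_symm_add]
  rfl

lemma kerSet_hasse : (hasse R A).kerSet = Set.range Polynomial.C := by
  ext p
  simp only [kerSet, Set.mem_ofPred_eq, hasse_D, Set.mem_range]
  constructor
  · intro hp
    by_contra hC
    have hdeg : 1 ≤ p.natDegree := by
      by_contra h0
      exact hC ⟨p.coeff 0, (eq_C_of_natDegree_eq_zero (by omega)).symm⟩
    have := hp _ hdeg
    rw [hasseDeriv_natDegree_eq_C, Polynomial.C_eq_zero, leadingCoeff_eq_zero] at this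
    simp [this] at hdeg
  · rintro ⟨a, rfl⟩ ℓ hℓ
    exact hasseDeriv_C ℓ a hℓ

end Hasse

open Polynomial in
lemma kerSet_map_hasse {k B : Type*} [CommRing k] [CommRing B] [Algebra k B]
    (E : k[X][X] ≃ₐ[k] B) : ((hasse k k[X]).map E).kerSet = Algebra.adjoin k {E (C X)} := by
  have hE : (E : k[X][X] →ₐ[k] B).comp (IsScalarTower.toAlgHom k k[X] k[X][X]) =
      Polynomial.aeval (E (C X)) :=
    Polynomial.algHom_ext (by simp)
  rw [kerSet_map, kerSet_hasse, ← Set.range_comp, Algebra.adjoin_singleton_eq_range_aeval, ← hE]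
  rfl

end HigherDerivation

lemma MvPolynomial.pderiv_aeval {R σ τ : Type*} [CommRing R] [Fintype σ]
    (F : σ → MvPolynomial τ R) (m : τ) (q : MvPolynomial σ R) :
    pderiv m (aeval F q) = ∑ i, aeval F (pderiv i q) * pderiv m (F i) := by
  classical
  induction q using MvPolynomial.induction_on with
  | C a => simp
  | add p q hp hq => simp only [map_add, hp, hq, add_mul, Finset.sum_add_distrib]
  | mul_X p i hp =>
    simp only [map_mul, aeval_X, pderiv_mul, hp, pderiv_X, Pi.single_apply, map_add, add_mul,
      Finset.sum_add_distrib, Finset.sum_mul, mul_right_comm _ (F i)]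
    simp [apply_ite]

section Jacobian

variable {k : Type*} [CommRing k]

lemma jacobianDeriv_map (φ : MvPolynomial (Fin 2) k →ₐ[k] MvPolynomial (Fin 2) k)
    (q₁ q₂ : MvPolynomial (Fin 2) k) :
    jacobianDeriv (φ q₁) (φ q₂) = φ (jacobianDeriv q₁ q₂) * jacobianDeriv (φ (X 0)) (φ (X 1)) := by
  rw [aeval_unique φ]
  simp only [jacobianDeriv, pderiv_aeval, Fin.sum_univ_two, Function.comp_apply, aeval_X,
    map_sub, map_mul]
  ring

lemma jacobianDeriv_X_zero (q : MvPolynomial (Fin 2) k) : jacobianDeriv (X 0) q = pderiv 1 q := by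
  simp [jacobianDeriv]

lemma isUnit_jacobianDeriv (e : MvPolynomial (Fin 2) k ≃ₐ[k] MvPolynomial (Fin 2) k) :
    IsUnit (jacobianDeriv (e (X 0)) (e (X 1))) := by
  have h := jacobianDeriv_map e.toAlgHom (e.symm (X 0)) (e.symm (X 1))
  simp only [AlgEquiv.toAlgHom_apply, AlgEquiv.apply_symm_apply,
    jacobianDeriv_X_zero, pderiv_X_self] at h
  exact IsUnit.of_mul_eq_one_right _ h.symm

open Polynomial.Bivariate in
lemma jacobianDeriv_eq_map_hasse_D_one_mul
    (e : MvPolynomial (Fin 2) k ≃ₐ[k] MvPolynomial (Fin 2) k) (b : MvPolynomial (Fin 2) k) :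
    jacobianDeriv (e (X 0)) b =
      ((HigherDerivation.hasse k (Polynomial k)).map ((equivMvPolynomial k).trans e)).D 1 b *
        jacobianDeriv (e (X 0)) (e (X 1)) := by
  obtain ⟨q, rfl⟩ := e.surjective b
  obtain ⟨p, rfl⟩ := (equivMvPolynomial k).surjective q
  have h := jacobianDeriv_map e.toAlgHom (X 0) (equivMvPolynomial k p)
  simp only [AlgEquiv.toAlgHom_apply, jacobianDeriv_X_zero,
    pderiv_one_equivMvPolynomial] at h
  simpa using h

lemma IsVariable.exists_algEquiv {f : MvPolynomial (Fin 2) k} (hf : IsVariable f) :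
    ∃ e : MvPolynomial (Fin 2) k ≃ₐ[k] MvPolynomial (Fin 2) k, e (X 0) = f := by
  obtain ⟨g, hind, hadj⟩ := hf
  have hsurj : Function.Surjective (aeval (R := k) ![f, g]) := by
    rw [← AlgHom.range_eq_top, ← Algebra.adjoin_range_eq_range_aeval, Matrix.range_cons,
      Matrix.range_cons, Matrix.range_empty, Set.union_empty, Set.singleton_union, hadj]
  exact ⟨AlgEquiv.ofBijective _ ⟨algebraicIndependent_iff_injective_aeval.mp hind, hsurj⟩,
    by simp⟩

end Jacobian

universe u

theorem stmt11_general {k : Type u} [Field k] (p : ℕ)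
    (f : MvPolynomial (Fin 2) k) (hvar : IsVariable f) :
    ∃ hd : HigherDerivation k (MvPolynomial (Fin 2) k),
      hd.LocallyFinite ∧ hd.Iterative ∧ IsJacobianType p hd f ∧
      hd.kerSet = ↑(Algebra.adjoin k {f}) ∧
      ∃ s : MvPolynomial (Fin 2) k, hd.IsSlice s := by
  obtain ⟨e, rfl⟩ := hvar.exists_algEquiv
  obtain ⟨c, hc, hJ⟩ := isUnit_iff_eq_C_of_isReduced.mp (isUnit_jacobianDeriv e)
  set E := (Polynomial.Bivariate.equivMvPolynomial k).trans e
  set hd := ((HigherDerivation.hasse k (Polynomial k)).map E).scale c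
  have hIter : hd.Iterative := ((HigherDerivation.iterative_hasse _ _).map E).scale c
  have hD1 : ⇑(hd.D 1) = jacobianDeriv (e (X 0)) := by
    ext1 b
    rw [jacobianDeriv_eq_map_hasse_D_one_mul, hJ, HigherDerivation.scale_D, pow_one, mul_comm,
      ← smul_eq_C_mul]
  have hker : hd.kerSet = Algebra.adjoin k {e (X 0)} := by
    rw [HigherDerivation.kerSet_scale hc, HigherDerivation.kerSet_map_hasse]
    simp [E]
  refine ⟨hd, ((HigherDerivation.locallyFinite_hasse _ _).map E).scale c, hIter,
    ⟨?_, hker ▸ Algebra.subset_adjoin rfl, congrFun hD1, fun ℓ _ b => ?_⟩, hker, e (X 1),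
    HigherDerivation.isSlice_of_isUnit_D_one ?_ fun ℓ hℓ => ?_⟩
  · intro a ha
    apply (isUnit_jacobianDeriv e).ne_zero
    simp [ha, jacobianDeriv]
  · rw [hIter.factorial_smul_D, hD1]
  · rw [hD1]
    exact isUnit_jacobianDeriv e
  · simp [hd, E, Polynomial.hasseDeriv_X _ hℓ]

/-- Theorem 3.1, (i) ⟹ (ii). Let `k` be a field of characteristic
`p > 0` and `f ∈ k[x,y]`. If `f` is a variable, then there exists a locally finite
iterative higher `k`-derivation `D` on `k[x,y]` of Jacobian type determined by `f`
with `k[x,y]^D = k[f]` which has a slice. -/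
theorem stmt11 {k : Type u} [Field k] (p : ℕ) (hp : 0 < p) [CharP k p]
    (f : MvPolynomial (Fin 2) k) (hvar : IsVariable f) :
    ∃ hd : HigherDerivation k (MvPolynomial (Fin 2) k),
      hd.LocallyFinite ∧ hd.Iterative ∧ IsJacobianType p hd f ∧
      hd.kerSet = ↑(Algebra.adjoin k {f}) ∧
      ∃ s : MvPolynomial (Fin 2) k, hd.IsSlice s :=
  stmt11_general p f hvar
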